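/- Let (P, W) be a joint type on 𝒳 × 𝒴 of length n (i.e., n·P(x)W(y|x) ∈ ℕ for all x, y) and fix a sequence xⁿ ∈ 𝒳ⁿ with empirical distribution P. Let Y₁,…,Yₙ be independent with Yᵢ ~ Q(·|xᵢ) for a channel Q. Then the probability that (xⁿ, Yⁿ) has joint type P·W is at least (n+1)^{-|𝒳||𝒴|} · exp(−n·D(W‖Q|P)), provided W(·|x) is absolutely continuous w.r.t. Q(·|x) whenever P(x)>0. -/

import Mathlib

/-!
A sequence has joint type `P·W` with `xⁿ` iff on each fibre `{i | xᵢ = a}` it has type `W(·|a)`,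
so the conditional type class is a product of ordinary type classes. A type class with counts
`k` summing to `m` has at least `multinomial(k)` elements (the `m!` rearrangements of one of them
hit each element at most `∏ k_b!` times), and since `multinomial(k) ∏ k_b^{k_b}` is the largest
of the at most `(m+1)^{|𝒴|}` terms of the multinomial expansion of `mᵐ`, the type class has
probability at least `(m+1)^{-|𝒴|}` under its own empirical distribution. Hence the conditional
type class has probability at least `(n+1)^{-|𝒳||𝒴|}` under `Wⁿ(·|xⁿ)`. Its elements all have
the same probability under `Qⁿ(·|xⁿ)` too, and the ratio of the two is
`∏ (Q/W)^{n P W} = e^{-n D(W‖Q|P)}`.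
-/

open scoped BigOperators

def IsPMF {α : Type*} [Fintype α] (p : α → ℝ) : Prop :=
  (∀ a, 0 ≤ p a) ∧ ∑ a, p a = 1

/-- Real-valued KL divergence with the convention that terms with `p a = 0` vanish. -/
noncomputable def klReal {α : Type*} [Fintype α] (p q : α → ℝ) : ℝ :=
  ∑ a, if p a = 0 then 0 else p a * Real.log (p a / q a)

/-- Conditional divergence `D(W‖Q|P) = Σ_x P(x) D(W(·|x)‖Q(·|x))`. -/
noncomputable def condKLReal {𝒳 𝒴 : Type*} [Fintype 𝒳] [Fintype 𝒴]
    (P : 𝒳 → ℝ) (W Q : 𝒳 → 𝒴 → ℝ) : ℝ :=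
  ∑ x, P x * klReal (W x) (Q x)

noncomputable def empDist {𝒳 : Type*} [Fintype 𝒳] [DecidableEq 𝒳] {n : ℕ}
    (x : Fin n → 𝒳) : 𝒳 → ℝ :=
  fun a => ((Finset.univ.filter fun i => x i = a).card : ℝ) / n

noncomputable def jointType {𝒳 𝒴 : Type*} [Fintype 𝒳] [Fintype 𝒴]
    [DecidableEq 𝒳] [DecidableEq 𝒴] {n : ℕ}
    (x : Fin n → 𝒳) (y : Fin n → 𝒴) : 𝒳 × 𝒴 → ℝ :=
  fun p => ((Finset.univ.filter fun i => x i = p.1 ∧ y i = p.2).card : ℝ) / n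

open Finset

section Multinomial

open Nat

variable {𝒴 : Type*} [Fintype 𝒴]

theorem factorial_mul_pow_le_factorial_mul_pow (k l : ℕ) : k ! * k ^ l ≤ l ! * k ^ k := by
  rcases le_total l k with hlk | hkl
  · have hfac : k ! = l ! * k.descFactorial (k - l) := by
      rw [← factorial_mul_descFactorial (Nat.sub_le k l), Nat.sub_sub_self hlk]
    calc k ! * k ^ l ≤ l ! * k ^ (k - l) * k ^ l := by
          rw [hfac]; gcongr; exact descFactorial_le_pow k _
      _ = l ! * k ^ k := by rw [mul_assoc, ← pow_add, Nat.sub_add_cancel hlk]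
  · obtain ⟨d, rfl⟩ := Nat.exists_eq_add_of_le hkl
    calc k ! * k ^ (k + d) = k ! * k ^ d * k ^ k := by ring
      _ ≤ k ! * (k + 1) ^ d * k ^ k := by gcongr; omega
      _ ≤ (k + d)! * k ^ k := by gcongr; exact factorial_mul_pow_le_factorial

theorem multinomial_mul_prod_pow_le {k l : 𝒴 → ℕ} (h : ∑ b, l b = ∑ b, k b) :
    multinomial univ l * ∏ b, k b ^ l b ≤ multinomial univ k * ∏ b, k b ^ k b := by
  refine Nat.le_of_mul_le_mul_right (c := (∏ b, (l b)!) * ∏ b, (k b)!) ?_ (by positivity)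
  calc multinomial univ l * (∏ b, k b ^ l b) * ((∏ b, (l b)!) * ∏ b, (k b)!)
      = ((∏ b, (l b)!) * multinomial univ l) * ∏ b, ((k b)! * k b ^ l b) := by
        rw [prod_mul_distrib]; ring
    _ ≤ ((∏ b, (k b)!) * multinomial univ k) * ∏ b, ((l b)! * k b ^ k b) := by
        rw [multinomial_spec, multinomial_spec, h]
        exact Nat.mul_le_mul_left _ <|
          prod_le_prod' fun b _ => factorial_mul_pow_le_factorial_mul_pow (k b) (l b)
    _ = multinomial univ k * (∏ b, k b ^ k b) * ((∏ b, (l b)!) * ∏ b, (k b)!) := by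
        rw [prod_mul_distrib]; ring

theorem card_piAntidiag_univ_le [DecidableEq 𝒴] (m : ℕ) :
    #(piAntidiag (univ : Finset 𝒴) m) ≤ (m + 1) ^ Fintype.card 𝒴 := by
  calc #(piAntidiag (univ : Finset 𝒴) m) ≤ #(Fintype.piFinset fun _ : 𝒴 => range (m + 1)) :=
        card_le_card fun l hl => Fintype.mem_piFinset.mpr fun b => mem_range_succ_iff.mpr <|
          (mem_piAntidiag.mp hl).1 ▸ single_le_sum (fun _ _ => Nat.zero_le _) (mem_univ b)
    _ = (m + 1) ^ Fintype.card 𝒴 := by simp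

theorem pow_sum_le_multinomial_mul_prod_pow [DecidableEq 𝒴] (k : 𝒴 → ℕ) :
    (∑ b, k b) ^ (∑ b, k b)
      ≤ (∑ b, k b + 1) ^ Fintype.card 𝒴 * (multinomial univ k * ∏ b, k b ^ k b) := by
  set m := ∑ b, k b
  calc m ^ m = ∑ l ∈ piAntidiag univ m, multinomial univ l * ∏ b, k b ^ l b :=
        sum_pow_eq_sum_piAntidiag _ _ _
    _ ≤ ∑ _l ∈ piAntidiag univ m, multinomial univ k * ∏ b, k b ^ k b :=
        sum_le_sum fun l hl => multinomial_mul_prod_pow_le (mem_piAntidiag.mp hl).1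
    _ ≤ (m + 1) ^ Fintype.card 𝒴 * (multinomial univ k * ∏ b, k b ^ k b) := by
        rw [sum_const, smul_eq_mul]; gcongr; exact card_piAntidiag_univ_le m

theorem inv_pow_le_multinomial_mul_prod_div_pow [DecidableEq 𝒴] (k : 𝒴 → ℕ) :
    (((∑ b, k b : ℕ) + 1 : ℝ) ^ Fintype.card 𝒴)⁻¹
      ≤ multinomial univ k * ∏ b, ((k b : ℝ) / (∑ b', k b' : ℕ)) ^ k b := by
  set m := ∑ b, k b
  rcases Nat.eq_zero_or_pos m with hm | hm
  · have hk : ∀ b, k b = 0 := fun b => sum_eq_zero_iff.mp hm b (mem_univ b)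
    simp [hk, hm]
    exact multinomial_pos univ k
  have hmpow : (0 : ℝ) < (m : ℝ) ^ m := by positivity
  simp_rw [div_pow]
  rw [prod_div_distrib, prod_pow_eq_pow_sum, ← mul_div_assoc, le_div_iff₀ hmpow,
    inv_mul_le_iff₀ (by positivity)]
  exact_mod_cast pow_sum_le_multinomial_mul_prod_pow k

end Multinomial

section TypeClass

variable {ι 𝒴 : Type*} [Fintype ι] [DecidableEq ι] [Fintype 𝒴] [DecidableEq 𝒴]

def typeClass (k : 𝒴 → ℕ) : Finset (ι → 𝒴) :=
  {f | ∀ b, #{i | f i = b} = k b}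

theorem typeClass_nonempty {k : 𝒴 → ℕ} (hk : ∑ b, k b = Fintype.card ι) :
    (typeClass (ι := ι) k).Nonempty := by
  obtain ⟨e⟩ : Nonempty (ι ≃ Σ b, Fin (k b)) := Fintype.card_eq.mp (by simp [hk])
  refine ⟨fun i => (e i).1, mem_filter.mpr ⟨mem_univ _, fun b => ?_⟩⟩
  rw [← Fintype.card_subtype, Fintype.card_congr ((e.subtypeEquiv fun _ => Iff.rfl).trans
    (Equiv.sigmaSubtype b)), Fintype.card_fin]

theorem comp_perm_mem_typeClass {k : 𝒴 → ℕ} {f : ι → 𝒴} (hf : f ∈ typeClass k)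
    (σ : Equiv.Perm ι) : f ∘ σ ∈ typeClass k := by
  simp only [typeClass, mem_filter, mem_univ, true_and] at hf ⊢
  intro b
  rw [← hf b]
  exact card_equiv σ (by simp)

theorem card_comp_perm_fiber (f : ι → 𝒴) (τ : Equiv.Perm ι) :
    #{σ : Equiv.Perm ι | f ∘ σ = f ∘ τ} = ∏ b, (#{i | f i = b}).factorial := by
  calc #{σ : Equiv.Perm ι | f ∘ σ = f ∘ τ} = Fintype.card {σ : Equiv.Perm ι // f ∘ σ = f} := by
        rw [← Fintype.card_subtype]
        refine Fintype.card_congr ((Equiv.mulRight τ⁻¹).subtypeEquiv fun σ => ?_)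
        simp only [Equiv.coe_mulRight, Equiv.Perm.coe_mul]
        constructor
        · intro h; rw [← Function.comp_assoc, h]; ext; simp
        · intro h
          calc f ∘ σ = (f ∘ σ ∘ ⇑τ⁻¹) ∘ τ := by ext; simp
            _ = f ∘ τ := by rw [h]
    _ = _ := by rw [DomMulAct.stabilizer_card f]; simp only [Fintype.card_subtype]

theorem multinomial_le_card_typeClass {k : 𝒴 → ℕ} (hk : ∑ b, k b = Fintype.card ι) :
    Nat.multinomial univ k ≤ #(typeClass (ι := ι) k) := by
  obtain ⟨f, hf⟩ := typeClass_nonempty hk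
  have hfib : ∀ b, #{i | f i = b} = k b := (mem_filter.mp hf).2
  have hperm : (∑ b, k b).factorial ≤ (∏ b, (k b).factorial) * #(typeClass (ι := ι) k) :=
    calc (∑ b, k b).factorial = #(univ : Finset (Equiv.Perm ι)) := by
          rw [card_univ, Fintype.card_perm, hk]
      _ ≤ (∏ b, (k b).factorial) * #(univ.image fun σ : Equiv.Perm ι => f ∘ σ) := by
          refine card_le_mul_card_image _ _ fun g hg => ?_
          obtain ⟨τ, -, rfl⟩ := mem_image.mp hg
          simp only [card_comp_perm_fiber, hfib, le_refl]
      _ ≤ _ := Nat.mul_le_mul_left _ (card_le_card fun g hg => by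
          obtain ⟨σ, -, rfl⟩ := mem_image.mp hg
          exact comp_perm_mem_typeClass hf σ)
  rw [← Nat.multinomial_spec] at hperm
  exact Nat.le_of_mul_le_mul_left hperm (prod_pos fun b _ => (k b).factorial_pos)

end TypeClass

section CondTypeClass

variable {ι 𝒳 𝒴 : Type*} [Fintype ι] [Fintype 𝒳] [DecidableEq 𝒳] [Fintype 𝒴] [DecidableEq 𝒴]

theorem prod_apply_eq_prod_pow_card {M : Type*} [CommMonoid M] (f : 𝒳 → 𝒴 → M)
    (x : ι → 𝒳) (y : ι → 𝒴) :
    ∏ i, f (x i) (y i) = ∏ a, ∏ b, f a b ^ #{i | x i = a ∧ y i = b} := by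
  rw [← prod_fiberwise' univ (fun i => (x i, y i)) fun p => f p.1 p.2, Fintype.prod_prod_type]
  simp only [prod_const, Prod.mk.injEq]

variable [DecidableEq ι]

def condTypeClass (x : ι → 𝒳) (N : 𝒳 → 𝒴 → ℕ) : Finset (ι → 𝒴) :=
  {y | ∀ a b, #{i | x i = a ∧ y i = b} = N a b}

theorem card_condTypeClass (x : ι → 𝒳) (N : 𝒳 → 𝒴 → ℕ) :
    #(condTypeClass x N) = ∏ a, #(typeClass (ι := {i // x i = a}) (N a)) := by
  let e : (ι → 𝒴) ≃ ∀ a, {i // x i = a} → 𝒴 :=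
    ((Equiv.sigmaFiberEquiv x).symm.arrowCongr (Equiv.refl 𝒴)).trans
      (Equiv.piCurry fun _ _ => 𝒴)
  rw [← Fintype.card_piFinset, card_equiv e fun y => ?_]
  have hfib : ∀ a b, #{j : {i // x i = a} | y j = b} = #{i | x i = a ∧ y i = b} := fun a b => by
    simp only [← Fintype.card_subtype]
    exact Fintype.card_congr (Equiv.subtypeSubtypeEquivSubtypeInter (x · = a) (y · = b))
  simp only [condTypeClass, typeClass, mem_filter, mem_univ, true_and, Fintype.mem_piFinset]
  exact forall_congr' fun a => forall_congr' fun b => by rw [← hfib]; rfl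

theorem sum_condTypeClass_prod {R : Type*} [CommSemiring R] (f : 𝒳 → 𝒴 → R) (x : ι → 𝒳)
    (N : 𝒳 → 𝒴 → ℕ) :
    ∑ y ∈ condTypeClass x N, ∏ i, f (x i) (y i)
      = #(condTypeClass x N) * ∏ a, ∏ b, f a b ^ N a b := by
  rw [← nsmul_eq_mul, ← sum_const]
  refine sum_congr rfl fun y hy => ?_
  simp only [condTypeClass, mem_filter, mem_univ, true_and] at hy
  simp only [prod_apply_eq_prod_pow_card, hy]

theorem inv_pow_le_card_condTypeClass_mul_prod (x : ι → 𝒳) (N : 𝒳 → 𝒴 → ℕ)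
    (hrow : ∀ a, #{i | x i = a} = ∑ b, N a b) :
    (((Fintype.card ι : ℝ) + 1) ^ (Fintype.card 𝒳 * Fintype.card 𝒴))⁻¹
      ≤ #(condTypeClass x N) * ∏ a, ∏ b, ((N a b : ℝ) / #{i | x i = a}) ^ N a b := by
  have hrow_le : ∀ a, #{i | x i = a} ≤ Fintype.card ι := fun a => card_filter_le _ _
  have hsub : ∀ a, ∑ b, N a b = Fintype.card {i // x i = a} := fun a => by
    rw [Fintype.card_subtype, hrow]
  have hstep : ∀ a, (((Fintype.card ι : ℝ) + 1) ^ Fintype.card 𝒴)⁻¹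
      ≤ #(typeClass (ι := {i // x i = a}) (N a)) * ∏ b, ((N a b : ℝ) / #{i | x i = a}) ^ N a b :=
    fun a => calc
      _ ≤ (((∑ b, N a b : ℕ) + 1 : ℝ) ^ Fintype.card 𝒴)⁻¹ := by
          gcongr; exact_mod_cast hrow a ▸ hrow_le a
      _ ≤ Nat.multinomial univ (N a) * ∏ b, ((N a b : ℝ) / (∑ b', N a b' : ℕ)) ^ N a b :=
          inv_pow_le_multinomial_mul_prod_div_pow (N a)
      _ ≤ _ := by
          rw [hrow]; gcongr; exact_mod_cast multinomial_le_card_typeClass (hsub a)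
  calc _ = ∏ _a : 𝒳, (((Fintype.card ι : ℝ) + 1) ^ Fintype.card 𝒴)⁻¹ := by
        rw [prod_const, card_univ, inv_pow, ← pow_mul, mul_comm]
    _ ≤ ∏ a, (#(typeClass (ι := {i // x i = a}) (N a))
          * ∏ b, ((N a b : ℝ) / #{i | x i = a}) ^ N a b) :=
        prod_le_prod (fun _ _ => by positivity) fun a _ => hstep a
    _ = _ := by rw [prod_mul_distrib, card_condTypeClass, Nat.cast_prod]

end CondTypeClass

theorem jointType_eq_iff_mem_condTypeClass {𝒳 𝒴 : Type*} [Fintype 𝒳] [Fintype 𝒴]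
    [DecidableEq 𝒳] [DecidableEq 𝒴] {n : ℕ} (hn : 0 < n) (x : Fin n → 𝒳) (y : Fin n → 𝒴)
    (N : 𝒳 → 𝒴 → ℕ) :
    jointType x y = (fun p => (N p.1 p.2 : ℝ) / n) ↔ y ∈ condTypeClass x N := by
  have hn' : (n : ℝ) ≠ 0 := by positivity
  simp only [funext_iff, jointType, div_left_inj' hn', Nat.cast_inj, Prod.forall, condTypeClass,
    mem_filter, mem_univ, true_and]

theorem ne_zero_and_ne_zero_of_natCast_eq_mul {k : ℕ} {t p w : ℝ} (hk : (k : ℝ) = t * (p * w))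
    (hk0 : k ≠ 0) : p ≠ 0 ∧ w ≠ 0 := by
  have h : t * (p * w) ≠ 0 := hk ▸ Nat.cast_ne_zero.mpr hk0
  exact mul_ne_zero_iff.mp (right_ne_zero_of_mul h)

theorem pow_eq_div_pow_mul_div_pow {k : ℕ} {t p w m : ℝ} (hk : (k : ℝ) = t * (p * w))
    (hm : m = t * p) (q : ℝ) : q ^ k = ((k : ℝ) / m) ^ k * (q / w) ^ k := by
  by_cases hk0 : k = 0
  · simp [hk0]
  obtain ⟨hp, hw⟩ := ne_zero_and_ne_zero_of_natCast_eq_mul hk hk0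
  have ht : t ≠ 0 := left_ne_zero_of_mul (hk ▸ Nat.cast_ne_zero.mpr hk0)
  rw [← mul_pow, hk, hm]
  field_simp

theorem exp_neg_mul_condKLReal {𝒳 𝒴 : Type*} [Fintype 𝒳] [Fintype 𝒴] {P : 𝒳 → ℝ}
    {W Q : 𝒳 → 𝒴 → ℝ} {t : ℝ} {N : 𝒳 → 𝒴 → ℕ} (hN : ∀ a b, (N a b : ℝ) = t * (P a * W a b))
    (hP : ∀ a, 0 ≤ P a) (hW : ∀ a b, 0 ≤ W a b) (hQ : ∀ a b, 0 ≤ Q a b)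
    (habs : ∀ a b, 0 < P a → Q a b = 0 → W a b = 0) :
    Real.exp (-t * condKLReal P W Q) = ∏ a, ∏ b, (Q a b / W a b) ^ N a b := by
  have hterm : ∀ a b, (-t * P a * if W a b = 0 then 0 else W a b * Real.log (W a b / Q a b))
      = N a b * Real.log (Q a b / W a b) := fun a b => by
    by_cases hWab : W a b = 0
    · simp [hN, hWab]
    rw [if_neg hWab, hN, ← inv_div, Real.log_inv]
    ring
  simp only [condKLReal, klReal, mul_sum, ← mul_assoc, Real.exp_sum]
  refine prod_congr rfl fun a _ => prod_congr rfl fun b _ => ?_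
  rw [hterm]
  by_cases hN0 : N a b = 0
  · simp [hN0]
  obtain ⟨hPa0, hWab0⟩ := ne_zero_and_ne_zero_of_natCast_eq_mul (hN a b) hN0
  have hPa : 0 < P a := (hP a).lt_of_ne' hPa0
  have hWab : 0 < W a b := (hW a b).lt_of_ne' hWab0
  have hQab : 0 < Q a b := (hQ a b).lt_of_ne fun h => hWab.ne' (habs a b hPa h.symm)
  rw [Real.exp_nat_mul, Real.exp_log (div_pos hQab hWab)]

/-- conditional-type lower bound: for a joint `n`-type `(P, W)` and a
sequence `xⁿ` of type `P`, the probability under `∏ᵢ Q(·|xᵢ)` that `(xⁿ, Yⁿ)` has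
joint type `P·W` is at least `(n+1)^{-|𝒳||𝒴|} e^{-n D(W‖Q|P)}`. -/
theorem stmt5 {𝒳 𝒴 : Type*} [Fintype 𝒳] [Fintype 𝒴] [DecidableEq 𝒳] [DecidableEq 𝒴]
    (n : ℕ) (hn : 0 < n)
    (P : 𝒳 → ℝ) (hP : IsPMF P) (W Q : 𝒳 → 𝒴 → ℝ)
    (hW : ∀ a, IsPMF (W a)) (hQ : ∀ a, IsPMF (Q a))
    (x : Fin n → 𝒳) (hx : empDist x = P)
    (hjtype : ∀ a b, ∃ k : ℕ, P a * W a b = (k : ℝ) / n)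
    (habs : ∀ a b, 0 < P a → Q a b = 0 → W a b = 0) :
    (((n : ℝ) + 1) ^ (Fintype.card 𝒳 * Fintype.card 𝒴))⁻¹
        * Real.exp (-(n : ℝ) * condKLReal P W Q)
      ≤ ∑ y : Fin n → 𝒴,
          Set.indicator {y : Fin n → 𝒴 | jointType x y = fun p => P p.1 * W p.1 p.2}
            (fun y => ∏ i, Q (x i) (y i)) y := by
  choose N hN using hjtype
  have hNR : ∀ a b, (N a b : ℝ) = n * (P a * W a b) := fun a b => by
    rw [hN]; field_simp
  have hrowR : ∀ a, (#{i | x i = a} : ℝ) = n * P a := fun a => by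
    rw [← hx]; exact (mul_div_cancel₀ _ (by positivity)).symm
  have hrow : ∀ a, #{i | x i = a} = ∑ b, N a b := fun a => by
    rw [← Nat.cast_inj (R := ℝ), hrowR, Nat.cast_sum]
    simp only [hNR, ← mul_sum, (hW a).2, mul_one]
  have hset : {y : Fin n → 𝒴 | jointType x y = fun p => P p.1 * W p.1 p.2} = condTypeClass x N := by
    ext y
    simp only [Set.mem_ofPred_eq, mem_coe, ← jointType_eq_iff_mem_condTypeClass hn, hN]
  have hQW : ∀ a b, Q a b ^ N a b
      = ((N a b : ℝ) / #{i | x i = a}) ^ N a b * (Q a b / W a b) ^ N a b := fun a b =>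
    pow_eq_div_pow_mul_div_pow (hNR a b) (hrowR a) (Q a b)
  rw [hset, sum_indicator_subset _ (subset_univ _), sum_condTypeClass_prod]
  simp only [hQW, prod_mul_distrib]
  rw [← exp_neg_mul_condKLReal hNR hP.1 (fun a => (hW a).1) (fun a => (hQ a).1) habs, ← mul_assoc]
  gcongr
  simpa only [Fintype.card_fin] using inv_pow_le_card_condTypeClass_mul_prod x N hrow
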